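/- arXiv:1405.2140 — 5 statements merged into one kernel-verified Lean document; each statement's English description precedes it below -/
import Mathlib

section
/- Let 0<ν<1 and X≥0. Then |1+X e^{iπν}|^{-2} ≤ (1−ν)^{-2}(1+X²)^{-1}, and likewise |1+X e^{-iπν}|^{-2} ≤ (1−ν)^{-2}(1+X²)^{-1}; equivalently, |1+X e^{±iπν}|² ≥ (1−ν)²(1+X²). -/
/-!
Since `|1 + X e^{iθ}|² = 1 + 2X cos θ + X²` and `2X ≤ 1 + X²`, this is at least
`min 1 (1 + cos θ) · (1 + X²)`. For `θ = ±πν` the half-angle formula and the concavity bound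
`cos (πν/2) ≥ 1 - ν` give `1 + cos θ = 2 cos² (πν/2) ≥ 2 (1 - ν)²`.
-/

open Real

lemma norm_one_add_mul_exp_mul_I_sq (X θ : ℝ) :
    ‖1 + (X : ℂ) * Complex.exp (θ * Complex.I)‖ ^ 2 = 1 + 2 * X * cos θ + X ^ 2 := by
  rw [Complex.sq_norm, Complex.exp_mul_I, Complex.normSq_apply]
  simp only [← Complex.ofReal_cos, ← Complex.ofReal_sin, Complex.add_re, Complex.add_im,
    Complex.mul_re, Complex.mul_im, Complex.one_re, Complex.one_im, Complex.ofReal_re,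
    Complex.ofReal_im, Complex.I_re, Complex.I_im]
  nlinarith [sin_sq_add_cos_sq θ]

lemma min_one_one_add_mul_one_add_sq_le {X : ℝ} (hX : 0 ≤ X) (c : ℝ) :
    min 1 (1 + c) * (1 + X ^ 2) ≤ 1 + 2 * X * c + X ^ 2 := by
  rcases le_total 0 c with hc | hc
  · rw [min_eq_left (by linarith)]
    nlinarith [mul_nonneg hX hc]
  · rw [min_eq_right (by linarith)]
    nlinarith [mul_nonneg (sq_nonneg (X - 1)) (neg_nonneg.2 hc)]

lemma two_mul_sq_one_sub_le_one_add_cos_pi_mul {ν : ℝ} (hν0 : 0 ≤ ν) (hν1 : ν ≤ 1) :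
    2 * (1 - ν) ^ 2 ≤ 1 + cos (π * ν) := by
  have hcos : 1 - ν ≤ cos (π * ν / 2) := by
    have := one_sub_mul_le_cos (x := π * ν / 2) (by positivity)
      (by nlinarith [pi_pos])
    rwa [show 2 / π * (π * ν / 2) = ν by field_simp] at this
  have hhalf : 1 + cos (π * ν) = 2 * cos (π * ν / 2) ^ 2 := by
    rw [cos_sq, show 2 * (π * ν / 2) = π * ν by ring]
    ring
  rw [hhalf]
  gcongr

lemma sq_one_sub_mul_one_add_sq_le_norm_sq {ν X θ : ℝ} (hν0 : 0 ≤ ν) (hν1 : ν ≤ 1)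
    (hX : 0 ≤ X) (hθ : cos θ = cos (π * ν)) :
    (1 - ν) ^ 2 * (1 + X ^ 2) ≤ ‖1 + (X : ℂ) * Complex.exp (θ * Complex.I)‖ ^ 2 := by
  have hmin : (1 - ν) ^ 2 ≤ min 1 (1 + cos θ) := by
    refine le_min (by nlinarith) ?_
    nlinarith [two_mul_sq_one_sub_le_one_add_cos_pi_mul hν0 hν1, sq_nonneg (1 - ν)]
  rw [norm_one_add_mul_exp_mul_I_sq]
  calc (1 - ν) ^ 2 * (1 + X ^ 2) ≤ min 1 (1 + cos θ) * (1 + X ^ 2) := by gcongr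
    _ ≤ _ := min_one_one_add_mul_one_add_sq_le hX _

theorem stmt7 (ν X : ℝ) (hν0 : 0 < ν) (hν1 : ν < 1) (hX : 0 ≤ X) :
    (‖1 + (X : ℂ) * Complex.exp (↑(Real.pi * ν) * Complex.I)‖ ^ 2)⁻¹
        ≤ ((1 - ν) ^ 2)⁻¹ * (1 + X ^ 2)⁻¹ ∧
    (‖1 + (X : ℂ) * Complex.exp (-↑(Real.pi * ν) * Complex.I)‖ ^ 2)⁻¹
        ≤ ((1 - ν) ^ 2)⁻¹ * (1 + X ^ 2)⁻¹ := by
  have hpos : 0 < (1 - ν) ^ 2 * (1 + X ^ 2) := by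
    have : 0 < 1 - ν := by linarith
    positivity
  rw [← mul_inv, ← Complex.ofReal_neg]
  exact ⟨inv_anti₀ hpos (sq_one_sub_mul_one_add_sq_le_norm_sq hν0.le hν1.le hX rfl),
    inv_anti₀ hpos (sq_one_sub_mul_one_add_sq_le_norm_sq hν0.le hν1.le hX (cos_neg _))⟩
end

section
/- Let 0<ν<1 and let z be a complex number with Re z>0. Then Γ(1+ν)^{-1}(1 + Σ_{n=1}^∞ ((n+1)^ν − n^ν) e^{-nz}) = (sin πν/π) ∫_0^∞ s^{-ν} (1−e^{-s}) / (s(1−e^{-z-s})) ds, where the series converges absolutely and the improper integral converges absolutely. -/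
/-!
Expanding `1 / (1 - e^{-z-s})` as a geometric series (`|e^{-z-s}| < 1`) writes the integrand as
`∑ₙ e^{-nz} s^{-ν-1} e^{-ns} (1 - e^{-s})`. Integration by parts against `d(s^{-ν} / (-ν))` gives
`∫₀^∞ s^{-ν-1} (1 - e^{-as}) ds = Γ(1-ν) a^ν / ν`, so the `n`-th term integrates to
`Γ(1-ν)/ν · ((n+1)^ν - n^ν) e^{-nz}`. Since `0 ≤ (n+1)^ν - n^ν ≤ 1` and `Re z > 0`, the integrals
of the norms are summable, which justifies exchanging sum and integral. Finally the reflection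
formula `Γ(ν) Γ(1-ν) = π / sin πν` turns `(sin πν / π) · Γ(1-ν) / ν` into `1 / Γ(1+ν)`.
-/

open MeasureTheory

/-- Analytic continuation of the DG generating function `ψ` to the cut strip:
`ψ(z) = (sin πν / π) ∫_0^∞ s^{-ν} (1 − e^{-s}) / (s (1 − e^{-z-s})) ds`. -/
noncomputable def psiC (ν : ℝ) (z : ℂ) : ℂ :=
  (Real.sin (Real.pi * ν) / Real.pi : ℝ) *
    ∫ s in Set.Ioi (0 : ℝ),
      (↑(s ^ (-ν)) * (1 - Complex.exp (-(s : ℂ)))) / ((s : ℂ) * (1 - Complex.exp (-z - (s : ℂ))))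

open Set Filter Topology Real

section

variable {ν : ℝ} {z : ℂ}

lemma rpow_mul_one_sub_exp_neg_le {p a s : ℝ} (hs : 0 < s) :
    s ^ p * (1 - exp (-(a * s))) ≤ a * s ^ (p + 1) := by
  rw [rpow_add_one hs.ne']
  nlinarith [add_one_le_exp (-(a * s)), rpow_pos_of_pos hs p]

lemma one_sub_exp_neg_nonneg {x : ℝ} (hx : 0 ≤ x) : 0 ≤ 1 - exp (-x) :=
  sub_nonneg.2 (exp_le_one_iff.2 (neg_nonpos.2 hx))

lemma integrableOn_rpow_mul_one_sub_exp_neg (hν0 : 0 < ν) (hν1 : ν < 1) {a : ℝ} (ha : 0 ≤ a) :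
    IntegrableOn (fun s : ℝ => s ^ (-ν - 1) * (1 - exp (-(a * s)))) (Ioi 0) := by
  have hcont : ContinuousOn (fun s : ℝ => s ^ (-ν - 1) * (1 - exp (-(a * s)))) (Ioi 0) :=
    ((continuousOn_id.rpow_const fun s hs => Or.inl (ne_of_gt hs)).mul (by fun_prop))
  have hnonneg : ∀ s ∈ Ioi (0 : ℝ), 0 ≤ s ^ (-ν - 1) * (1 - exp (-(a * s))) := fun s hs =>
    mul_nonneg (rpow_nonneg (le_of_lt hs) _) (one_sub_exp_neg_nonneg (mul_nonneg ha (le_of_lt hs)))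
  rw [← Ioc_union_Ioi_eq_Ioi zero_le_one]
  refine IntegrableOn.union ?_ ?_
  · have hbound : IntegrableOn (fun s : ℝ => a * s ^ (-ν)) (Ioc 0 1) :=
      ((intervalIntegrable_iff_integrableOn_Ioc_of_le zero_le_one).1
        (intervalIntegral.intervalIntegrable_rpow' (by linarith))).const_mul a
    refine hbound.mono' ((hcont.mono Ioc_subset_Ioi_self).aestronglyMeasurable measurableSet_Ioc) ?_
    filter_upwards [ae_restrict_mem measurableSet_Ioc] with s hs
    rw [Real.norm_of_nonneg (hnonneg s hs.1)]
    simpa using rpow_mul_one_sub_exp_neg_le (p := -ν - 1) (a := a) hs.1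
  · refine (integrableOn_Ioi_rpow_of_lt (a := -ν - 1) (by linarith) one_pos).mono'
      ((hcont.mono (Ioi_subset_Ioi zero_le_one)).aestronglyMeasurable measurableSet_Ioi) ?_
    filter_upwards [ae_restrict_mem measurableSet_Ioi] with s hs
    have hs0 : (0 : ℝ) < s := zero_lt_one.trans hs
    rw [Real.norm_of_nonneg (hnonneg s hs0)]
    exact mul_le_of_le_one_right (rpow_nonneg hs0.le _) (by linarith [exp_pos (-(a * s))])

lemma tendsto_rpow_neg_mul_one_sub_exp_neg_nhdsGT_zero (hν1 : ν < 1) {a : ℝ} (ha : 0 ≤ a) :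
    Tendsto (fun s : ℝ => s ^ (-ν) * (1 - exp (-(a * s)))) (𝓝[>] 0) (𝓝 0) := by
  have hbound : Tendsto (fun s : ℝ => a * s ^ (-ν + 1)) (𝓝[>] 0) (𝓝 0) := by
    have := ((continuousAt_rpow_const 0 (-ν + 1) (Or.inr (by linarith))).tendsto.mono_left
      (nhdsWithin_le_nhds (s := Ioi 0))).const_mul a
    rwa [zero_rpow (by linarith), mul_zero] at this
  refine squeeze_zero' ?_ ?_ hbound
  · filter_upwards [self_mem_nhdsWithin] with s (hs : 0 < s)
    exact mul_nonneg (rpow_nonneg hs.le _) (one_sub_exp_neg_nonneg (mul_nonneg ha hs.le))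
  · filter_upwards [self_mem_nhdsWithin] with s (hs : 0 < s)
    exact rpow_mul_one_sub_exp_neg_le hs

lemma tendsto_rpow_neg_mul_one_sub_exp_neg_atTop (hν0 : 0 < ν) {a : ℝ} (ha : 0 ≤ a) :
    Tendsto (fun s : ℝ => s ^ (-ν) * (1 - exp (-(a * s)))) atTop (𝓝 0) := by
  refine squeeze_zero' ?_ ?_ (tendsto_rpow_neg_atTop hν0)
  · filter_upwards [eventually_gt_atTop 0] with s hs
    exact mul_nonneg (rpow_nonneg hs.le _) (one_sub_exp_neg_nonneg (mul_nonneg ha hs.le))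
  · filter_upwards [eventually_gt_atTop 0] with s hs
    exact mul_le_of_le_one_right (rpow_nonneg hs.le _) (by linarith [exp_pos (-(a * s))])

lemma integral_rpow_neg_mul_exp_neg_mul (hν1 : ν < 1) {a : ℝ} (ha : 0 < a) :
    ∫ s in Ioi 0, s ^ (-ν) * exp (-(a * s)) = Gamma (1 - ν) * a ^ (ν - 1) := by
  have h := integral_rpow_mul_exp_neg_mul_Ioi (a := 1 - ν) (by linarith) ha
  rw [sub_sub_cancel_left, one_div, inv_rpow ha.le, ← rpow_neg ha.le, neg_sub] at h
  rw [h, mul_comm]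

lemma integral_rpow_mul_one_sub_exp_neg (hν0 : 0 < ν) (hν1 : ν < 1) {a : ℝ} (ha : 0 ≤ a) :
    ∫ s in Ioi 0, s ^ (-ν - 1) * (1 - exp (-(a * s))) = Gamma (1 - ν) / ν * a ^ ν := by
  rcases ha.eq_or_lt with rfl | ha
  · simp [zero_rpow hν0.ne']
  have hu : ∀ s ∈ Ioi (0 : ℝ),
      HasDerivAt (fun s => 1 - exp (-(a * s))) (a * exp (-(a * s))) s := fun s _ => by
    simpa [mul_comm] using (((hasDerivAt_id s).const_mul a).neg.exp).const_sub 1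
  have hv : ∀ s ∈ Ioi (0 : ℝ), HasDerivAt (fun s => s ^ (-ν) / -ν) (s ^ (-ν - 1)) s :=
    fun s hs => by
      simpa [hν0.ne'] using (hasDerivAt_rpow_const (p := -ν) (Or.inl (ne_of_gt hs))).div_const (-ν)
  have huv (l : Filter ℝ) (h : Tendsto (fun s : ℝ => s ^ (-ν) * (1 - exp (-(a * s)))) l (𝓝 0)) :
      Tendsto ((fun s => 1 - exp (-(a * s))) * fun s => s ^ (-ν) / -ν) l (𝓝 0) := by
    refine (zero_div (-ν) ▸ h.div_const (-ν)).congr fun s => ?_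
    simp only [Pi.mul_apply]
    ring
  have hibp := integral_Ioi_mul_deriv_eq_deriv_mul hu hv ?_ ?_
    (huv _ (tendsto_rpow_neg_mul_one_sub_exp_neg_nhdsGT_zero hν1 ha.le))
    (huv _ (tendsto_rpow_neg_mul_one_sub_exp_neg_atTop hν0 ha.le))
  · calc ∫ s in Ioi 0, s ^ (-ν - 1) * (1 - exp (-(a * s)))
        = ∫ s in Ioi 0, (1 - exp (-(a * s))) * s ^ (-ν - 1) := by simp_rw [mul_comm]
      _ = a / ν * ∫ s in Ioi 0, s ^ (-ν) * exp (-(a * s)) := by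
        rw [hibp, ← integral_const_mul, sub_zero, zero_sub, ← integral_neg]
        congr 1 with s
        field_simp
      _ = Gamma (1 - ν) / ν * a ^ ν := by
        rw [integral_rpow_neg_mul_exp_neg_mul hν1 ha, rpow_sub_one ha.ne']
        field_simp
  · exact (integrableOn_rpow_mul_one_sub_exp_neg hν0 hν1 ha.le).congr_fun
      (fun s _ => mul_comm _ _) measurableSet_Ioi
  · refine IntegrableOn.congr_fun ((integrableOn_rpow_mul_exp_neg_mul_rpow (s := -ν) (p := 1)
      (by linarith) one_pos ha).const_mul (-(a / ν))) (fun s _ => ?_) measurableSet_Ioi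
    simp only [Pi.mul_apply, rpow_one, neg_mul]
    field_simp

lemma mul_exp_neg_mul_one_sub_exp_neg (c a s : ℝ) :
    c * exp (-(a * s)) * (1 - exp (-s)) =
      c * (1 - exp (-((a + 1) * s))) - c * (1 - exp (-(a * s))) := by
  rw [show -((a + 1) * s) = -(a * s) + -s by ring, exp_add]
  ring

lemma integrableOn_rpow_mul_exp_neg_mul_one_sub_exp_neg (hν0 : 0 < ν) (hν1 : ν < 1) {a : ℝ}
    (ha : 0 ≤ a) :
    IntegrableOn (fun s : ℝ => s ^ (-ν - 1) * exp (-(a * s)) * (1 - exp (-s))) (Ioi 0) := by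
  simp_rw [mul_exp_neg_mul_one_sub_exp_neg]
  exact (integrableOn_rpow_mul_one_sub_exp_neg hν0 hν1 (by linarith)).sub
    (integrableOn_rpow_mul_one_sub_exp_neg hν0 hν1 ha)

lemma integral_rpow_mul_exp_neg_mul_one_sub_exp_neg (hν0 : 0 < ν) (hν1 : ν < 1) {a : ℝ}
    (ha : 0 ≤ a) :
    ∫ s in Ioi 0, s ^ (-ν - 1) * exp (-(a * s)) * (1 - exp (-s)) =
      Gamma (1 - ν) / ν * ((a + 1) ^ ν - a ^ ν) := by
  simp_rw [mul_exp_neg_mul_one_sub_exp_neg]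
  rw [integral_sub (integrableOn_rpow_mul_one_sub_exp_neg hν0 hν1 (by linarith))
    (integrableOn_rpow_mul_one_sub_exp_neg hν0 hν1 ha),
    integral_rpow_mul_one_sub_exp_neg hν0 hν1 (by linarith),
    integral_rpow_mul_one_sub_exp_neg hν0 hν1 ha, mul_sub]

lemma sin_div_pi_mul_Gamma_one_sub_div (h : sin (π * ν) ≠ 0) :
    sin (π * ν) / π * (Gamma (1 - ν) / ν) = 1 / Gamma (1 + ν) := by
  have hreflect : Gamma ν * Gamma (1 - ν) = π / sin (π * ν) := Gamma_mul_Gamma_one_sub ν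
  have hν : ν ≠ 0 := by rintro rfl; simp at h
  have hΓ : Gamma ν ≠ 0 := fun h0 => by
    rw [h0, zero_mul, eq_comm, div_eq_zero_iff] at hreflect
    exact hreflect.elim pi_ne_zero h
  rw [add_comm, Gamma_add_one hν, eq_div_iff (mul_ne_zero hν hΓ)]
  field_simp
  rw [mul_assoc, mul_comm (Gamma (1 - ν)), hreflect]
  field_simp

lemma rpow_add_one_sub_rpow_nonneg {x : ℝ} (hx : 0 ≤ x) (hν : 0 ≤ ν) : 0 ≤ (x + 1) ^ ν - x ^ ν :=
  sub_nonneg.2 (rpow_le_rpow hx (by linarith) hν)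

lemma rpow_add_one_sub_rpow_le_one {x : ℝ} (hx : 0 ≤ x) (hν0 : 0 ≤ ν) (hν1 : ν ≤ 1) :
    (x + 1) ^ ν - x ^ ν ≤ 1 := by
  linarith [rpow_add_le_add_rpow hx zero_le_one hν0 hν1, one_rpow ν]

noncomputable def psiTerm (ν : ℝ) (z : ℂ) (n : ℕ) : ℂ :=
  (((n + 1 : ℝ) ^ ν - (n : ℝ) ^ ν : ℝ) : ℂ) * Complex.exp (-n * z)

noncomputable def psiIntegrand (ν : ℝ) (z : ℂ) (s : ℝ) : ℂ :=
  (↑(s ^ (-ν)) * (1 - Complex.exp (-(s : ℂ)))) / ((s : ℂ) * (1 - Complex.exp (-z - (s : ℂ))))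

lemma norm_psiTerm (hν : 0 ≤ ν) (n : ℕ) :
    ‖psiTerm ν z n‖ = ((n + 1 : ℝ) ^ ν - (n : ℝ) ^ ν) * Real.exp (-z.re) ^ n := by
  rw [psiTerm, norm_mul, Complex.norm_real, Real.norm_of_nonneg
    (rpow_add_one_sub_rpow_nonneg n.cast_nonneg hν), Complex.norm_exp, ← Real.exp_nat_mul]
  simp

lemma summable_norm_psiTerm (hν0 : 0 ≤ ν) (hν1 : ν ≤ 1) (hz : 0 < z.re) :
    Summable fun n => ‖psiTerm ν z n‖ := by
  have hr : Real.exp (-z.re) < 1 := Real.exp_lt_one_iff.2 (by linarith)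
  refine (summable_geometric_of_lt_one (Real.exp_pos _).le hr).of_nonneg_of_le
    (fun n => norm_nonneg _) fun n => ?_
  rw [norm_psiTerm hν0]
  exact mul_le_of_le_one_left (by positivity) (rpow_add_one_sub_rpow_le_one n.cast_nonneg hν0 hν1)

lemma psiTerm_zero (hν : ν ≠ 0) : psiTerm ν z 0 = 1 := by
  simp [psiTerm, zero_rpow hν]

lemma psiTerm_succ (n : ℕ) :
    psiTerm ν z (n + 1) = ((((n : ℝ) + 2) ^ ν - ((n : ℝ) + 1) ^ ν : ℝ) : ℂ)
        * Complex.exp (-(((n : ℕ) + 1 : ℕ) : ℂ) * z) := by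
  rw [psiTerm]
  push_cast
  ring_nf

lemma norm_exp_neg_sub_ofReal (s : ℝ) : ‖Complex.exp (-z - s)‖ = Real.exp (-z.re - s) := by
  simp [Complex.norm_exp]

lemma psiIntegrand_eq {s : ℝ} (hs : 0 < s) : psiIntegrand ν z s =
    ((s ^ (-ν - 1) * (1 - Real.exp (-s)) : ℝ) : ℂ) / (1 - Complex.exp (-z - s)) := by
  have hs' : (s : ℂ) ≠ 0 := by exact_mod_cast hs.ne'
  rw [psiIntegrand, rpow_sub_one hs.ne', div_mul_eq_div_div_swap]
  push_cast
  field_simp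

lemma hasSum_psiIntegrand (hz : 0 ≤ z.re) {s : ℝ} (hs : 0 < s) :
    HasSum (fun n : ℕ => Complex.exp (-n * z) *
      ((s ^ (-ν - 1) * Real.exp (-(n * s)) * (1 - Real.exp (-s)) : ℝ) : ℂ))
      (psiIntegrand ν z s) := by
  have hw : ‖Complex.exp (-z - s)‖ < 1 := by
    rw [norm_exp_neg_sub_ofReal, Real.exp_lt_one_iff]; linarith
  have hterm : ∀ n : ℕ, Complex.exp (-n * z) *
      ((s ^ (-ν - 1) * Real.exp (-(n * s)) * (1 - Real.exp (-s)) : ℝ) : ℂ) =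
      ((s ^ (-ν - 1) * (1 - Real.exp (-s)) : ℝ) : ℂ) * Complex.exp (-z - s) ^ n := fun n => by
    rw [← Complex.exp_nat_mul, show (n : ℂ) * (-z - s) = -n * z + -(n * s) by ring,
      Complex.exp_add]
    push_cast
    ring
  rw [psiIntegrand_eq hs, div_eq_mul_inv]
  simp_rw [hterm]
  exact (hasSum_geometric_of_norm_lt_one hw).mul_left _

lemma norm_psiIntegrand_le (hz : 0 < z.re) {s : ℝ} (hs : 0 < s) :
    ‖psiIntegrand ν z s‖ ≤ (1 - Real.exp (-z.re))⁻¹ * (s ^ (-ν - 1) * (1 - Real.exp (-s))) := by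
  have hlower : 1 - Real.exp (-z.re) ≤ ‖1 - Complex.exp (-z - s)‖ := by
    have := norm_sub_norm_le (1 : ℂ) (Complex.exp (-z - s))
    rw [norm_one, norm_exp_neg_sub_ofReal] at this
    linarith [Real.exp_le_exp.2 (by linarith : -z.re - s ≤ -z.re)]
  have hpos : 0 < 1 - Real.exp (-z.re) := sub_pos.2 (Real.exp_lt_one_iff.2 (by linarith))
  rw [psiIntegrand_eq hs, norm_div, Complex.norm_real, Real.norm_of_nonneg
    (mul_nonneg (rpow_nonneg hs.le _) (one_sub_exp_neg_nonneg hs.le)), div_eq_inv_mul]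
  exact mul_le_mul_of_nonneg_right (inv_anti₀ hpos hlower)
    (mul_nonneg (rpow_nonneg hs.le _) (one_sub_exp_neg_nonneg hs.le))

lemma integrableOn_psiIntegrand (hν0 : 0 < ν) (hν1 : ν < 1) (hz : 0 < z.re) :
    IntegrableOn (psiIntegrand ν z) (Ioi 0) := by
  refine ((integrableOn_rpow_mul_one_sub_exp_neg hν0 hν1 zero_le_one).const_mul
    (1 - Real.exp (-z.re))⁻¹).mono' ?_ ?_
  · exact (by unfold psiIntegrand; fun_prop : Measurable (psiIntegrand ν z)).aestronglyMeasurable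
  · filter_upwards [ae_restrict_mem measurableSet_Ioi] with s hs
    simpa using norm_psiIntegrand_le (ν := ν) hz hs

lemma integral_psiIntegrand (hν0 : 0 < ν) (hν1 : ν < 1) (hz : 0 < z.re) :
    ∫ s in Ioi 0, psiIntegrand ν z s = ((Gamma (1 - ν) / ν : ℝ) : ℂ) * ∑' n, psiTerm ν z n := by
  set φ : ℕ → ℝ → ℝ := fun n s => s ^ (-ν - 1) * Real.exp (-(n * s)) * (1 - Real.exp (-s))
  have hφ_int (n : ℕ) : IntegrableOn (φ n) (Ioi 0) :=
    integrableOn_rpow_mul_exp_neg_mul_one_sub_exp_neg hν0 hν1 n.cast_nonneg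
  have hφ_integral (n : ℕ) : ∫ s in Ioi 0, φ n s = Gamma (1 - ν) / ν * ((n + 1) ^ ν - n ^ ν) :=
    integral_rpow_mul_exp_neg_mul_one_sub_exp_neg hν0 hν1 n.cast_nonneg
  have hφ_nonneg (n : ℕ) (s : ℝ) (hs : s ∈ Ioi 0) : 0 ≤ φ n s :=
    mul_nonneg (mul_nonneg (rpow_nonneg (le_of_lt hs) _) (Real.exp_pos _).le)
      (one_sub_exp_neg_nonneg (le_of_lt hs))
  set F : ℕ → ℝ → ℂ := fun n s => Complex.exp (-n * z) * (φ n s : ℂ)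
  have hF_int (n : ℕ) : IntegrableOn (F n) (Ioi 0) := (hφ_int n).ofReal.const_mul _
  have hF_integral (n : ℕ) :
      ∫ s in Ioi 0, F n s = ((Gamma (1 - ν) / ν : ℝ) : ℂ) * psiTerm ν z n := by
    rw [integral_const_mul, integral_complex_ofReal, hφ_integral, psiTerm]
    push_cast
    ring
  have hF_integral_norm (n : ℕ) :
      ∫ s in Ioi 0, ‖F n s‖ = Gamma (1 - ν) / ν * ‖psiTerm ν z n‖ := by
    rw [setIntegral_congr_fun measurableSet_Ioi (g := fun s => ‖Complex.exp (-n * z)‖ * φ n s)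
      fun s hs => by
        simp only [F, norm_mul, Complex.norm_real, Real.norm_of_nonneg (hφ_nonneg n s hs)],
      integral_const_mul, hφ_integral, psiTerm, norm_mul, Complex.norm_real, Real.norm_of_nonneg
      (rpow_add_one_sub_rpow_nonneg n.cast_nonneg hν0.le)]
    ring
  have hF_hasSum := hasSum_integral_of_summable_integral_norm hF_int (by
    simp_rw [hF_integral_norm]
    exact (summable_norm_psiTerm hν0.le hν1.le hz).mul_left _)
  rw [setIntegral_congr_fun measurableSet_Ioi
    fun s hs => (hasSum_psiIntegrand hz.le hs).tsum_eq.symm, ← hF_hasSum.tsum_eq]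
  simp_rw [hF_integral, tsum_mul_left]

end

theorem stmt12 (ν : ℝ) (hν0 : 0 < ν) (hν1 : ν < 1) (z : ℂ) (hz : 0 < z.re) :
    Summable (fun n : ℕ =>
      ((((n : ℝ) + 2) ^ ν - ((n : ℝ) + 1) ^ ν : ℝ) : ℂ)
        * Complex.exp (-(((n : ℕ) + 1 : ℕ) : ℂ) * z)) ∧
    IntegrableOn (fun s : ℝ =>
      (↑(s ^ (-ν)) * (1 - Complex.exp (-(s : ℂ)))) / ((s : ℂ) * (1 - Complex.exp (-z - (s : ℂ)))))
      (Set.Ioi 0) ∧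
    ((1 / Real.Gamma (1 + ν) : ℝ) : ℂ)
        * (1 + ∑' n : ℕ, ((((n : ℝ) + 2) ^ ν - ((n : ℝ) + 1) ^ ν : ℝ) : ℂ)
            * Complex.exp (-(((n : ℕ) + 1 : ℕ) : ℂ) * z))
      = psiC ν z := by
  have hsin : Real.sin (π * ν) ≠ 0 :=
    (sin_pos_of_pos_of_lt_pi (by positivity) (by nlinarith [pi_pos])).ne'
  have hsum : Summable (psiTerm ν z) := (summable_norm_psiTerm hν0.le hν1.le hz).of_norm
  refine ⟨((summable_nat_add_iff 1).2 hsum).congr psiTerm_succ,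
    integrableOn_psiIntegrand hν0 hν1 hz, ?_⟩
  calc _ = ((1 / Gamma (1 + ν) : ℝ) : ℂ) * ∑' n, psiTerm ν z n := by
        rw [hsum.tsum_eq_zero_add, psiTerm_zero hν0.ne']
        simp_rw [psiTerm_succ]
    _ = ((Real.sin (π * ν) / π : ℝ) : ℂ) * ∫ s in Ioi 0, psiIntegrand ν z s := by
        rw [integral_psiIntegrand hν0 hν1 hz, ← mul_assoc, ← Complex.ofReal_mul,
          sin_div_pi_mul_Gamma_one_sub_div hsin]
    _ = psiC ν z := rfl
end

section
/- Let 0<ν<1 and define ψ(z) = (sin πν/π) ∫_0^∞ s^{-ν} (1−e^{-s}) / (s(1−e^{-z-s})) ds for complex z with |Im z|≤π and z∉(−∞,0]. Then for every such z and every 0<μ<∞, 1+μψ(z) ≠ 0. -/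
open MeasureTheory

lemma denom_ne (z : ℂ) (him : |z.im| ≤ Real.pi) (hcut : ¬(z.im = 0 ∧ z.re ≤ 0))
    (s : ℝ) (hs : 0 < s) : 1 - Complex.exp (-z - (s : ℂ)) ≠ 0 := by
  intro h
  have h1 : Complex.exp (-z - (s : ℂ)) = 1 := (sub_eq_zero.mp h).symm
  rw [Complex.exp_eq_one_iff] at h1
  obtain ⟨n, hn⟩ := h1
  have hre : -z.re - s = 0 := by
    have := congrArg Complex.re hn
    simpa using this
  have himeq : -z.im = n * (2 * Real.pi) := by
    have := congrArg Complex.im hn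
    simpa using this
  have hn0 : n = 0 := by
    by_contra hn0
    have h1n : (1 : ℝ) ≤ |(n : ℝ)| := by
      exact_mod_cast Int.one_le_abs hn0
    have h2 : |(n : ℝ)| * |2 * Real.pi| ≤ Real.pi := by
      rw [← abs_mul, ← himeq]; simpa using him
    rw [abs_of_pos (by positivity : (0:ℝ) < 2 * Real.pi)] at h2
    have hpi := Real.pi_pos
    nlinarith
  have hz : z.im = 0 := by
    rw [hn0] at himeq; push_cast at himeq; linarith
  exact hcut ⟨hz, by linarith⟩

lemma F_pointwise (ν : ℝ) (z : ℂ) (s : ℝ) :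
    (↑(s ^ (-ν)) * (1 - Complex.exp (-(s : ℂ)))) / ((s : ℂ) * (1 - Complex.exp (-z - (s : ℂ))))
      = ↑(s ^ (-ν) * (1 - Real.exp (-s)) / s) * (1 - Complex.exp (-z - (s : ℂ)))⁻¹ := by
  push_cast
  rw [div_mul_eq_div_div, div_eq_mul_inv]

lemma denom_im (z : ℂ) (s : ℝ) :
    (1 - Complex.exp (-z - (s : ℂ))).im = Real.exp (-z.re - s) * Real.sin z.im := by
  simp [Complex.exp_im, Complex.sub_im, Complex.neg_im, Complex.neg_re, Real.sin_neg]

lemma denom_re (z : ℂ) (s : ℝ) :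
    (1 - Complex.exp (-z - (s : ℂ))).re = 1 - Real.exp (-z.re - s) * Real.cos z.im := by
  simp [Complex.exp_re, Complex.sub_re, Complex.neg_im, Complex.neg_re, Real.cos_neg]

theorem stmt13 (ν : ℝ) (hν0 : 0 < ν) (hν1 : ν < 1) (z : ℂ)
    (him : |z.im| ≤ Real.pi) (hcut : ¬(z.im = 0 ∧ z.re ≤ 0))
    (μ : ℝ) (hμ : 0 < μ) :
    1 + (μ : ℂ) * psiC ν z ≠ 0 := by
  set F : ℝ → ℂ := fun s =>
    (↑(s ^ (-ν)) * (1 - Complex.exp (-(s : ℂ)))) / ((s : ℂ) * (1 - Complex.exp (-z - (s : ℂ))))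
    with hFdef
  by_cases hInt : IntegrableOn F (Set.Ioi 0) volume
  case neg =>
    have : psiC ν z = 0 := by
      rw [psiC, integral_undef hInt, mul_zero]
    simp [this]
  set c : ℝ := Real.sin (Real.pi * ν) / Real.pi with hc
  have hcpos : 0 < c :=
    div_pos (Real.sin_pos_of_pos_of_lt_pi (by positivity) (by nlinarith [Real.pi_pos]))
      Real.pi_pos
  set I : ℂ := ∫ s in Set.Ioi (0 : ℝ), F s with hI
  have hpsi : psiC ν z = (c : ℂ) * I := rfl
  set g : ℝ → ℝ := fun s => s ^ (-ν) * (1 - Real.exp (-s)) / s with hg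
  have hgpos : ∀ s ∈ Set.Ioi (0 : ℝ), 0 < g s := by
    intro s hs
    rw [Set.mem_Ioi] at hs
    have h1 : (0:ℝ) < s ^ (-ν) := Real.rpow_pos_of_pos hs _
    have h2 : Real.exp (-s) < 1 := Real.exp_lt_one_iff.mpr (by linarith)
    exact div_pos (mul_pos h1 (by linarith)) hs
  have hne : ∀ s ∈ Set.Ioi (0 : ℝ), 1 - Complex.exp (-z - (s : ℂ)) ≠ 0 := fun s hs =>
    denom_ne z him hcut s (Set.mem_Ioi.mp hs)
  have hnsq : ∀ s ∈ Set.Ioi (0 : ℝ), 0 < Complex.normSq (1 - Complex.exp (-z - (s : ℂ))) :=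
    fun s hs => Complex.normSq_pos.mpr (hne s hs)
  have hFim : ∀ s ∈ Set.Ioi (0 : ℝ), (F s).im =
      -Real.sin z.im *
        (g s * Real.exp (-z.re - s) / Complex.normSq (1 - Complex.exp (-z - (s : ℂ)))) := by
    intro s hs
    rw [hFdef]
    simp only
    rw [F_pointwise, Complex.im_ofReal_mul, Complex.inv_im, denom_im]
    rw [hg]
    ring
  have hFre : ∀ s ∈ Set.Ioi (0 : ℝ), (F s).re =
      g s * ((1 - Real.exp (-z.re - s) * Real.cos z.im) /
        Complex.normSq (1 - Complex.exp (-z - (s : ℂ)))) := by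
    intro s hs
    rw [hFdef]
    simp only
    rw [F_pointwise, Complex.re_ofReal_mul, Complex.inv_re, denom_re]
  by_cases hsin : Real.sin z.im = 0
  case pos =>
    -- real-part argument
    intro hcontra
    have hre0 : (1 + (μ : ℂ) * psiC ν z).re = 0 := by rw [hcontra]; simp
    have hcb : ∀ s ∈ Set.Ioi (0:ℝ), Real.exp (-z.re - s) * Real.cos z.im ≤ 1 := by
      intro s hs
      have hs' : 0 < s := Set.mem_Ioi.mp hs
      rcases Real.sin_eq_zero_iff.mp hsin with ⟨n, hn⟩
      have hb : |(n : ℝ)| * Real.pi ≤ Real.pi := by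
        have h0 : |(n : ℝ) * Real.pi| ≤ Real.pi := by rw [hn]; exact him
        rwa [abs_mul, abs_of_pos Real.pi_pos] at h0
      have hb1 : |(n : ℝ)| ≤ 1 := by nlinarith [Real.pi_pos, abs_nonneg ((n : ℝ))]
      have hb2 := abs_le.mp hb1
      have hbl : -1 ≤ n := by exact_mod_cast hb2.1
      have hbr : n ≤ 1 := by exact_mod_cast hb2.2
      interval_cases n
      · have hcos : Real.cos z.im = -1 := by
          rw [← hn]; push_cast; rw [neg_one_mul, Real.cos_neg, Real.cos_pi]
        rw [hcos]
        nlinarith [Real.exp_pos (-z.re - s)]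
      · have hz0 : z.im = 0 := by rw [← hn]; push_cast; ring
        have hzre : 0 < z.re := by
          by_contra hzre
          push_neg at hzre
          exact hcut ⟨hz0, hzre⟩
        have hcos : Real.cos z.im = 1 := by rw [hz0, Real.cos_zero]
        rw [hcos, mul_one]
        have : Real.exp (-z.re - s) < 1 := Real.exp_lt_one_iff.mpr (by linarith)
        linarith
      · have hcos : Real.cos z.im = -1 := by
          rw [← hn]; push_cast; rw [one_mul, Real.cos_pi]
        rw [hcos]
        nlinarith [Real.exp_pos (-z.re - s)]
    have hIre : 0 ≤ I.re := by
      have h4 := integral_re (𝕜 := ℂ) hInt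
      simp only [RCLike.re_to_complex] at h4
      rw [hI, ← h4]
      apply setIntegral_nonneg measurableSet_Ioi
      intro s hs
      rw [hFre s hs]
      exact mul_nonneg (hgpos s hs).le
        (div_nonneg (by linarith [hcb s hs]) (hnsq s hs).le)
    have : (1 + (μ : ℂ) * psiC ν z).re = 1 + μ * (c * I.re) := by
      rw [hpsi]
      simp [Complex.add_re, Complex.mul_re, Complex.ofReal_re, Complex.ofReal_im]
    rw [this] at hre0
    nlinarith [mul_nonneg hμ.le (mul_nonneg hcpos.le hIre)]
  case neg =>
    -- imaginary-part argument
    intro hcontra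
    have him0 : (1 + (μ : ℂ) * psiC ν z).im = 0 := by rw [hcontra]; simp
    set h : ℝ → ℝ := fun s =>
      g s * Real.exp (-z.re - s) / Complex.normSq (1 - Complex.exp (-z - (s : ℂ))) with hh
    have hhInt : IntegrableOn h (Set.Ioi 0) volume := by
      have h1 : IntegrableOn (fun s => (F s).im) (Set.Ioi 0) volume := hInt.im
      have h2 : IntegrableOn (fun x => (-Real.sin z.im)⁻¹ * (F x).im) (Set.Ioi 0) volume :=
        h1.const_mul (-Real.sin z.im)⁻¹
      apply h2.congr_fun _ measurableSet_Ioi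
      intro s hs
      simp only
      rw [hFim s hs, inv_mul_cancel_left₀ (neg_ne_zero.mpr hsin)]
    have hIim : I.im = -Real.sin z.im * ∫ s in Set.Ioi (0:ℝ), h s := by
      have h5 := integral_im (𝕜 := ℂ) hInt
      simp only [RCLike.im_to_complex] at h5
      rw [hI, ← h5, ← integral_const_mul]
      apply setIntegral_congr_fun measurableSet_Ioi
      intro s hs
      exact hFim s hs
    have hpos : 0 < ∫ s in Set.Ioi (0:ℝ), h s := by
      rw [setIntegral_pos_iff_support_of_nonneg_ae _ hhInt]
      · refine lt_of_lt_of_le ?_ (measure_mono (s := Set.Ioi (0:ℝ)) ?_)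
        · simp [Real.volume_Ioi]
        · intro s hs
          refine ⟨?_, hs⟩
          have := hgpos s hs
          have := hnsq s hs
          have : 0 < h s := by rw [hh]; positivity
          exact Function.mem_support.mpr (ne_of_gt this)
      · filter_upwards [ae_restrict_mem measurableSet_Ioi] with s hs
        have := hgpos s hs
        have := hnsq s hs
        rw [hh]; positivity
    have him1 : (1 + (μ : ℂ) * psiC ν z).im = μ * (c * I.im) := by
      rw [hpsi]
      simp [Complex.add_im, Complex.mul_im, Complex.ofReal_re, Complex.ofReal_im]
    rw [him1, hIim] at him0
    have : Real.sin z.im = 0 := by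
      rcases mul_eq_zero.mp him0 with h' | h'
      · exact absurd h' (ne_of_gt hμ)
      · rcases mul_eq_zero.mp h' with h'' | h''
        · exact absurd h'' (ne_of_gt hcpos)
        · rcases mul_eq_zero.mp h'' with h3 | h3
          · linarith [neg_eq_zero.mp h3]
          · exact absurd h3 (ne_of_gt hpos)
    exact hsin this
end

section
/- Let 0<ν<1 and μ>0. Define the scalar sequence U^0=1 and, for n≥1, (1+β₀μ)U^n = U^{n-1} − μ Σ_{j=1}^{n-1} β_{n-j} U^j. Let ψ(z) = Γ(1+ν)^{-1}(1 + Σ_{n=1}^∞ ((n+1)^ν − n^ν) e^{-nz}). Then for every complex z with Re z>0, the series Σ_{n=0}^∞ U^n e^{-nz} converges and equals ((1−e^{-z})^{-1} + μψ(z)) / (1 + μψ(z)). -/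
/-- DG weights: `β₀ = 1/Γ(1+ν)`, `β_j = ((j+1)^ν − 2j^ν + (j−1)^ν)/Γ(1+ν)` for `j ≥ 1`. -/
noncomputable def dgBeta (ν : ℝ) : ℕ → ℝ
  | 0 => 1 / Real.Gamma (1 + ν)
  | j + 1 => (((j : ℝ) + 2) ^ ν - 2 * ((j : ℝ) + 1) ^ ν + (j : ℝ) ^ ν) / Real.Gamma (1 + ν)

/-- The generating function `ψ(z) = Γ(1+ν)⁻¹ (1 + Σ_{n=1}^∞ ((n+1)^ν − n^ν) e^{-nz})`. -/
noncomputable def psiSeries (ν : ℝ) (z : ℂ) : ℂ :=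
  ((1 / Real.Gamma (1 + ν) : ℝ) : ℂ) *
    (1 + ∑' n : ℕ, ((((n : ℝ) + 2) ^ ν - ((n : ℝ) + 1) ^ ν : ℝ) : ℂ)
        * Complex.exp (-(((n : ℕ) + 1 : ℕ) : ℂ) * z))

/-!
Write `a n = (n + 1)^ν - n^ν`, so that `β (n + 1) = (a (n + 1) - a n) / Γ(1 + ν)`. Concavity of
`t ↦ t^ν` makes `a` decrease from `a 0 = 1` while staying nonnegative; hence `β k ≤ 0` for `k ≥ 1`,
whereas the partial sums `β 0 + ⋯ + β m = a m / Γ(1 + ν)` are nonnegative, and a discrete maximum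
principle gives `0 ≤ U n ≤ 1`. For `x = e^{-z}` we have `‖x‖ < 1`, so all generating functions
converge absolutely; written as a Cauchy convolution, the recurrence becomes
`F (1 - x + μ B) = 1 + μ B` for `F = ∑ U n xⁿ` and `B = ∑ β n xⁿ`. Summation by parts gives
`B = (1 - x) ψ(z)`, and dividing by `1 - x` yields the formula.
-/

open Finset

noncomputable def rpowIncrement (ν : ℝ) (n : ℕ) : ℝ := ((n : ℝ) + 1) ^ ν - (n : ℝ) ^ ν

section RpowIncrement

variable {ν : ℝ}

lemma rpowIncrement_zero (hν : 0 < ν) : rpowIncrement ν 0 = 1 := by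
  simp [rpowIncrement, Real.zero_rpow hν.ne']

lemma rpowIncrement_succ (n : ℕ) :
    rpowIncrement ν (n + 1) = ((n : ℝ) + 2) ^ ν - ((n : ℝ) + 1) ^ ν := by
  rw [rpowIncrement]
  push_cast
  ring_nf

lemma rpowIncrement_nonneg (hν : 0 ≤ ν) (n : ℕ) : 0 ≤ rpowIncrement ν n :=
  sub_nonneg.2 (Real.rpow_le_rpow n.cast_nonneg (by linarith) hν)

lemma rpowIncrement_antitone (hν0 : 0 ≤ ν) (hν1 : ν ≤ 1) : Antitone (rpowIncrement ν) := by
  refine antitone_nat_of_succ_le fun n => ?_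
  have h := (Real.concaveOn_rpow hν0 hν1).slope_anti_adjacent (x := n) (y := n + 1) (z := n + 2)
    (Set.mem_Ici.2 n.cast_nonneg) (Set.mem_Ici.2 (by positivity)) (by linarith) (by linarith)
  rw [rpowIncrement_succ, rpowIncrement]
  norm_num at h
  linarith

lemma rpowIncrement_le_one (hν0 : 0 < ν) (hν1 : ν ≤ 1) (n : ℕ) : rpowIncrement ν n ≤ 1 :=
  rpowIncrement_zero hν0 ▸ rpowIncrement_antitone hν0.le hν1 n.zero_le

end RpowIncrement

section DGWeights

variable {ν : ℝ}

lemma dgBeta_zero : dgBeta ν 0 = 1 / Real.Gamma (1 + ν) := rfl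

lemma dgBeta_succ (n : ℕ) :
    dgBeta ν (n + 1) = (rpowIncrement ν (n + 1) - rpowIncrement ν n) / Real.Gamma (1 + ν) := by
  rw [dgBeta, rpowIncrement_succ, rpowIncrement]
  ring

lemma dgBeta_succ_nonpos (hν0 : 0 ≤ ν) (hν1 : ν ≤ 1) (n : ℕ) : dgBeta ν (n + 1) ≤ 0 := by
  rw [dgBeta_succ]
  exact div_nonpos_of_nonpos_of_nonneg (sub_nonpos.2 (rpowIncrement_antitone hν0 hν1 n.le_succ))
    (Real.Gamma_pos_of_pos (by linarith)).le

lemma sum_range_dgBeta (hν : 0 < ν) (n : ℕ) :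
    ∑ k ∈ range (n + 1), dgBeta ν k = rpowIncrement ν n / Real.Gamma (1 + ν) := by
  induction n with
  | zero => simp [dgBeta_zero, rpowIncrement_zero hν]
  | succ n ih => rw [sum_range_succ, ih, dgBeta_succ]; ring

lemma abs_dgBeta_le (hν0 : 0 < ν) (hν1 : ν ≤ 1) (n : ℕ) :
    |dgBeta ν n| ≤ 1 / Real.Gamma (1 + ν) := by
  have hΓ : 0 < Real.Gamma (1 + ν) := Real.Gamma_pos_of_pos (by linarith)
  cases n with
  | zero => exact (abs_of_pos (one_div_pos.2 hΓ)).le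
  | succ n =>
    rw [dgBeta_succ, abs_div, abs_of_pos hΓ]
    gcongr
    exact abs_sub_le_of_nonneg_of_le (rpowIncrement_nonneg hν0.le _)
      (rpowIncrement_le_one hν0 hν1 _) (rpowIncrement_nonneg hν0.le _)
      (rpowIncrement_le_one hν0 hν1 _)

end DGWeights

structure IsConvolutionRecSolution (β : ℕ → ℝ) (μ : ℝ) (U : ℕ → ℝ) : Prop where
  zero : U 0 = 1
  step : ∀ n : ℕ, 1 ≤ n →
    (1 + β 0 * μ) * U n = U (n - 1) - μ * ∑ j ∈ Icc 1 (n - 1), β (n - j) * U j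

section ConvolutionRecurrence

variable {β U : ℕ → ℝ} {μ : ℝ}

lemma sum_Icc_kernel_mul_mem_Icc (hβ : ∀ k, β (k + 1) ≤ 0)
    (hsum : ∀ m, 0 ≤ ∑ k ∈ range (m + 1), β k) {m : ℕ} (hU : ∀ j ∈ Icc 1 m, U j ∈ Set.Icc 0 1) :
    ∑ j ∈ Icc 1 m, β (m + 1 - j) * U j ∈ Set.Icc (-β 0) 0 := by
  have hβj : ∀ j ∈ Icc 1 m, β (m + 1 - j) ≤ 0 := fun j hj => by
    obtain ⟨k, hk⟩ : ∃ k, m + 1 - j = k + 1 := ⟨m - j, by grind⟩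
    exact hk ▸ hβ k
  have hreflect : ∑ j ∈ Icc 1 m, β (m + 1 - j) = ∑ k ∈ range (m + 1), β k - β 0 := by
    rw [← Ico_add_one_right_eq_Icc, sum_Ico_reflect β 1 (by omega : m + 1 ≤ m + 1 + 1),
      range_eq_Ico, sum_eq_sum_Ico_succ_bot (by omega : 0 < m + 1)]
    simp
  constructor
  · calc -β 0 ≤ ∑ k ∈ range (m + 1), β k - β 0 := by linarith [hsum m]
      _ = ∑ j ∈ Icc 1 m, β (m + 1 - j) := hreflect.symm
      _ ≤ _ := sum_le_sum fun j hj => by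
        simpa using mul_le_mul_of_nonpos_left (hU j hj).2 (hβj j hj)
  · exact sum_nonpos fun j hj => mul_nonpos_of_nonpos_of_nonneg (hβj j hj) (hU j hj).1

theorem IsConvolutionRecSolution.mem_Icc (hU : IsConvolutionRecSolution β μ U) (hμ : 0 ≤ μ)
    (hβ : ∀ k, β (k + 1) ≤ 0) (hsum : ∀ m, 0 ≤ ∑ k ∈ range (m + 1), β k) (n : ℕ) :
    U n ∈ Set.Icc 0 1 := by
  induction n using Nat.strong_induction_on with
  | _ n ih =>
    match n with
    | 0 => simp [hU.zero]
    | m + 1 =>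
      have hβ0 : 0 ≤ β 0 := by simpa using hsum 0
      obtain ⟨hS0, hS1⟩ := sum_Icc_kernel_mul_mem_Icc hβ hsum (m := m) (U := U)
        fun j hj => ih j (by grind)
      obtain ⟨hUm0, hUm1⟩ := ih m m.lt_succ_self
      have hpos : 0 < 1 + β 0 * μ := by positivity
      have hUsucc :
          U (m + 1) = (U m - μ * ∑ j ∈ Icc 1 m, β (m + 1 - j) * U j) / (1 + β 0 * μ) := by
        rw [eq_div_iff hpos.ne', mul_comm, hU.step (m + 1) (by omega)]
        simp
      rw [hUsucc]
      constructor
      · exact div_nonneg (by nlinarith) hpos.le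
      · exact (div_le_one hpos).2 (by nlinarith)

lemma IsConvolutionRecSolution.succ_eq (hU : IsConvolutionRecSolution β μ U) (n : ℕ) :
    U (n + 1) = U n - μ * (∑ k ∈ range (n + 2), U k * β (n + 1 - k) - β (n + 1)) := by
  have h := hU.step (n + 1) (by omega)
  rw [sum_range_succ, sum_range_succ', hU.zero]
  rw [← Ico_add_one_right_eq_Icc, sum_Ico_eq_sum_range] at h
  simp only [Nat.add_sub_cancel, Nat.sub_zero, Nat.sub_self, add_comm 1, mul_comm (U _)] at h ⊢
  linear_combination h

theorem IsConvolutionRecSolution.tsum_mul_pow_mul (hU : IsConvolutionRecSolution β μ U) {x : ℂ}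
    (hUx : Summable fun n => ‖(U n : ℂ) * x ^ n‖) (hβx : Summable fun n => ‖(β n : ℂ) * x ^ n‖) :
    (∑' n, (U n : ℂ) * x ^ n) * (1 - x + μ * ∑' n, (β n : ℂ) * x ^ n)
      = 1 + μ * ∑' n, (β n : ℂ) * x ^ n := by
  set f : ℕ → ℂ := fun n => U n * x ^ n
  set b : ℕ → ℂ := fun n => β n * x ^ n
  set c : ℕ → ℂ := fun n => ∑ k ∈ range (n + 1), f k * b (n - k)
  have hcauchy : (∑' n, f n) * (∑' n, b n) = ∑' n, c n :=
    tsum_mul_tsum_eq_tsum_sum_range_of_summable_norm hUx hβx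
  have hc : Summable c := (summable_norm_sum_mul_range_of_summable_norm hUx hβx).of_norm
  have hstep : ∀ n, f (n + 1) - x * f n + μ * (c (n + 1) - b (n + 1)) = 0 := by
    intro n
    have hc : c (n + 1) = (∑ k ∈ range (n + 2), U k * β (n + 1 - k) : ℝ) * x ^ (n + 1) := by
      push_cast
      rw [sum_mul]
      refine sum_congr rfl fun k hk => ?_
      rw [← pow_mul_pow_sub x (by grind : k ≤ n + 1)]
      ring
    simp only [f, b, hc]
    rw [hU.succ_eq n]
    push_cast
    ring
  have hsucc {g : ℕ → ℂ} (hg : Summable g) : HasSum (fun n => g (n + 1)) (∑' n, g n - g 0) := by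
    simpa using (hasSum_nat_add_iff' 1).2 hg.hasSum
  have hsum := ((hsucc hUx.of_norm).sub (hUx.of_norm.hasSum.mul_left x)).add
    (((hsucc hc).sub (hsucc hβx.of_norm)).mul_left (μ : ℂ))
  have hzero := (show HasSum (fun n => f (n + 1) - x * f n + μ * (c (n + 1) - b (n + 1))) _
    from hsum).unique (by simp only [hstep]; exact hasSum_zero)
  rw [← hcauchy] at hzero
  simp only [f, b, c, hU.zero, Complex.ofReal_one, zero_add, sum_range_one, Nat.sub_zero,
    pow_zero] at hzero
  linear_combination hzero

end ConvolutionRecurrence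

section GeneratingFunctions

variable {ν : ℝ}

lemma summable_norm_mul_pow_of_abs_le {c : ℕ → ℝ} {C : ℝ} (hc : ∀ n, |c n| ≤ C) {x : ℂ}
    (hx : ‖x‖ < 1) : Summable fun n => ‖(c n : ℂ) * x ^ n‖ := by
  refine .of_nonneg_of_le (fun _ => norm_nonneg _) (fun n => ?_)
    ((summable_geometric_of_lt_one (norm_nonneg _) hx).mul_left C)
  rw [norm_mul, norm_pow, Complex.norm_real, Real.norm_eq_abs]
  exact mul_le_mul_of_nonneg_right (hc n) (by positivity)

lemma Complex.exp_neg_natCast_mul (n : ℕ) (z : ℂ) :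
    Complex.exp (-(n : ℂ) * z) = Complex.exp (-z) ^ n := by
  rw [← Complex.exp_nat_mul]
  ring_nf

lemma psiSeries_eq_tsum (hν : 0 < ν) {z : ℂ}
    (ha : Summable fun n => (rpowIncrement ν n : ℂ) * Complex.exp (-z) ^ n) :
    psiSeries ν z
      = (1 / Real.Gamma (1 + ν) : ℝ) * ∑' n, (rpowIncrement ν n : ℂ) * Complex.exp (-z) ^ n := by
  simp only [psiSeries, ha.tsum_eq_zero_add, rpowIncrement_zero hν, rpowIncrement_succ,
    Complex.exp_neg_natCast_mul]
  push_cast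
  ring

lemma tsum_dgBeta_mul_pow (hν : 0 < ν) {x : ℂ}
    (ha : Summable fun n => (rpowIncrement ν n : ℂ) * x ^ n) :
    ∑' n, (dgBeta ν n : ℂ) * x ^ n
      = (1 - x) * ((1 / Real.Gamma (1 + ν) : ℝ) * ∑' n, (rpowIncrement ν n : ℂ) * x ^ n) := by
  have hsucc : ∀ n, (dgBeta ν (n + 1) : ℂ) * x ^ (n + 1) = (1 / Real.Gamma (1 + ν) : ℝ) *
      ((rpowIncrement ν (n + 1) : ℂ) * x ^ (n + 1) - x * ((rpowIncrement ν n : ℂ) * x ^ n)) := by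
    intro n
    rw [dgBeta_succ]
    push_cast
    ring
  have ha1 := (summable_nat_add_iff 1).2 ha
  have hb1 : Summable fun n => (dgBeta ν (n + 1) : ℂ) * x ^ (n + 1) := by
    simp_rw [hsucc]
    exact (ha1.sub (ha.mul_left x)).mul_left _
  have hb : Summable fun n => (dgBeta ν n : ℂ) * x ^ n :=
    (summable_nat_add_iff (f := fun n => (dgBeta ν n : ℂ) * x ^ n) 1).1 hb1
  rw [hb.tsum_eq_zero_add, tsum_congr hsucc, tsum_mul_left,
    ha1.tsum_sub (ha.mul_left x), tsum_mul_left, ha.tsum_eq_zero_add, rpowIncrement_zero hν,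
    dgBeta_zero]
  push_cast
  ring

end GeneratingFunctions

-- Nothing needs to be assumed about `1 + p`: the equation rules out `p = -1` because `x ≠ 0`.
lemma eq_div_of_mul_one_sub_mul_eq {K : Type*} [Field K] {F x p : K} (hx0 : x ≠ 0)
    (hx1 : 1 - x ≠ 0) (h : F * ((1 - x) * (1 + p)) = 1 + (1 - x) * p) :
    F = ((1 - x)⁻¹ + p) / (1 + p) := by
  have hp : 1 + p ≠ 0 := fun hp => hx0 (by linear_combination -h + (F - 1) * (1 - x) * hp)
  field_simp
  linear_combination h

theorem stmt17 (ν : ℝ) (hν0 : 0 < ν) (hν1 : ν < 1) (μ : ℝ) (hμ : 0 < μ)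
    (U : ℕ → ℝ) (hU0 : U 0 = 1)
    (hUrec : ∀ n : ℕ, 1 ≤ n →
      (1 + dgBeta ν 0 * μ) * U n
        = U (n - 1) - μ * ∑ j ∈ Finset.Icc 1 (n - 1), dgBeta ν (n - j) * U j)
    (z : ℂ) (hz : 0 < z.re) :
    Summable (fun n : ℕ => (U n : ℂ) * Complex.exp (-(n : ℂ) * z)) ∧
    ∑' n : ℕ, (U n : ℂ) * Complex.exp (-(n : ℂ) * z)
      = ((1 - Complex.exp (-z))⁻¹ + (μ : ℂ) * psiSeries ν z)
          / (1 + (μ : ℂ) * psiSeries ν z) := by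
  have hΓ : 0 < Real.Gamma (1 + ν) := Real.Gamma_pos_of_pos (by linarith)
  have hU : IsConvolutionRecSolution (dgBeta ν) μ U := ⟨hU0, hUrec⟩
  have hUb := hU.mem_Icc hμ.le (dgBeta_succ_nonpos hν0.le hν1.le)
    fun m => sum_range_dgBeta hν0 m ▸ div_nonneg (rpowIncrement_nonneg hν0.le m) hΓ.le
  have hx : ‖Complex.exp (-z)‖ < 1 := by simpa [Complex.norm_exp] using hz
  have hx1 : 1 - Complex.exp (-z) ≠ 0 := sub_ne_zero.2 fun h => by simp [← h] at hx
  have hUx := summable_norm_mul_pow_of_abs_le (C := 1)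
    (fun n => abs_le.2 ⟨by linarith [(hUb n).1], (hUb n).2⟩) hx
  have hax := (summable_norm_mul_pow_of_abs_le (C := 1) (fun n => abs_le.2
    ⟨by linarith [rpowIncrement_nonneg hν0.le n], rpowIncrement_le_one hν0 hν1.le n⟩) hx).of_norm
  have hgen := hU.tsum_mul_pow_mul hUx
    (summable_norm_mul_pow_of_abs_le (abs_dgBeta_le hν0 hν1.le) hx)
  rw [tsum_dgBeta_mul_pow hν0 hax, ← psiSeries_eq_tsum hν0 hax] at hgen
  simp_rw [Complex.exp_neg_natCast_mul]
  exact ⟨hUx.of_norm, eq_div_of_mul_one_sub_mul_eq (Complex.exp_ne_zero _) hx1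
    (by linear_combination hgen)⟩
end

section
/- There is an absolute constant C such that for all μ>0 and all integers n≥1, 0 ≤ (1+μ)^{-n} − e^{-nμ} ≤ C n^{-1} min((μn)², (μn)^{-1}). -/
/-!
Write `U^n - e^{-nμ} = (1+μ)^{-n} (1 - qⁿ)` with `q = (1+μ)e^{-μ}`. Since `1 - μ² ≤ q ≤ 1`,
Bernoulli's inequality gives `0 ≤ 1 - qⁿ ≤ min(nμ², 1)`. The error is therefore at most
`nμ²`, and at most `C/(n²μ)` because `(1+μ)ⁿ` dominates `(nμ)³` for `μ ≤ 1` and `n²μ` for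
`μ ≥ 1`.
-/

open Real

noncomputable def backwardEulerError (μ : ℝ) (n : ℕ) : ℝ :=
  ((1 + μ) ^ n)⁻¹ - exp (-(n * μ))

lemma one_add_mul_exp_neg_le_one (x : ℝ) : (1 + x) * exp (-x) ≤ 1 := by
  rw [← le_div_iff₀ (exp_pos _), exp_neg, div_inv_eq_mul, one_mul, add_comm]
  exact add_one_le_exp x

lemma one_sub_sq_le_one_add_mul_exp_neg {x : ℝ} (hx : -1 ≤ x) :
    1 - x ^ 2 ≤ (1 + x) * exp (-x) := by
  have h : 1 - x ≤ exp (-x) := by linarith [add_one_le_exp (-x)]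
  nlinarith

lemma backwardEulerError_eq {μ : ℝ} (hμ : -1 < μ) (n : ℕ) :
    backwardEulerError μ n = ((1 + μ) ^ n)⁻¹ * (1 - ((1 + μ) * exp (-μ)) ^ n) := by
  have h : (1 + μ) ^ n ≠ 0 := pow_ne_zero _ (by linarith)
  rw [backwardEulerError, mul_pow, ← exp_nat_mul, mul_neg, mul_sub, mul_one,
    inv_mul_cancel_left₀ h]

lemma backwardEulerError_nonneg {μ : ℝ} (hμ : -1 < μ) (n : ℕ) :
    0 ≤ backwardEulerError μ n := by
  rw [backwardEulerError_eq hμ]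
  have hq : 0 ≤ (1 + μ) * exp (-μ) := mul_nonneg (by linarith) (exp_pos _).le
  have : ((1 + μ) * exp (-μ)) ^ n ≤ 1 := pow_le_one₀ hq (one_add_mul_exp_neg_le_one μ)
  exact mul_nonneg (inv_nonneg.mpr (pow_nonneg (by linarith) n)) (by linarith)

lemma backwardEulerError_le_inv_pow (μ : ℝ) (n : ℕ) :
    backwardEulerError μ n ≤ ((1 + μ) ^ n)⁻¹ :=
  sub_le_self _ (exp_pos _).le

lemma backwardEulerError_le_mul_inv_pow {μ : ℝ} (hμ : -1 < μ) (n : ℕ) :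
    backwardEulerError μ n ≤ n * μ ^ 2 * ((1 + μ) ^ n)⁻¹ := by
  set q := (1 + μ) * exp (-μ)
  have hq : 0 ≤ q := mul_nonneg (by linarith) (exp_pos _).le
  have hBernoulli : 1 - q ^ n ≤ n * (1 - q) := by
    linarith [one_add_mul_sub_le_pow (by linarith : -1 ≤ q) n]
  have hq_sq : 1 - q ≤ μ ^ 2 := by linarith [one_sub_sq_le_one_add_mul_exp_neg hμ.le]
  rw [backwardEulerError_eq hμ, mul_comm]
  gcongr
  · exact inv_nonneg.mpr (pow_nonneg (by linarith) n)
  · exact hBernoulli.trans (by gcongr)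

lemma exp_half_le_one_add {x : ℝ} (h0 : 0 ≤ x) (h1 : x ≤ 1) : exp (x / 2) ≤ 1 + x := by
  have hlog : x / 2 ≤ log (1 + x) := calc
    x / 2 ≤ 1 - (1 + x)⁻¹ := by
      rw [le_sub_iff_add_le, ← le_sub_iff_add_le', inv_le_iff_one_le_mul₀ (by linarith)]
      nlinarith
    _ ≤ log (1 + x) := one_sub_inv_le_log_of_pos (by linarith)
  simpa [exp_log (by linarith : 0 < 1 + x)] using exp_le_exp.mpr hlog

lemma nat_mul_pow_three_le_one_add_pow {x : ℝ} (h0 : 0 ≤ x) (h1 : x ≤ 1) (n : ℕ) :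
    (n * x) ^ 3 ≤ 48 * (1 + x) ^ n := by
  have hfact : (n * x / 2) ^ 3 / Nat.factorial 3 ≤ exp (n * x / 2) :=
    pow_div_factorial_le_exp _ (by positivity) 3
  have hexp : exp (n * x / 2) ≤ (1 + x) ^ n := by
    rw [mul_div_assoc, exp_nat_mul]
    exact pow_le_pow_left₀ (exp_pos _).le (exp_half_le_one_add h0 h1) n
  norm_num [Nat.factorial] at hfact
  linarith

lemma nat_sq_mul_le_one_add_pow {x : ℝ} (hx : 1 ≤ x) (n : ℕ) :
    (n : ℝ) ^ 2 * x ≤ 2 * (1 + x) ^ n := by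
  induction n with
  | zero => simp
  | succ n ih =>
    have hBernoulli : 1 + n * x ≤ (1 + x) ^ n := one_add_mul_le_pow (by linarith) n
    push_cast
    rw [pow_succ (1 + x)]
    nlinarith [mul_le_mul_of_nonneg_left hBernoulli (by linarith : (0 : ℝ) ≤ x),
      mul_nonneg (mul_nonneg n.cast_nonneg (by linarith : (0 : ℝ) ≤ x)) (sub_nonneg.mpr hx)]

lemma backwardEulerError_le_nat_mul_sq {μ : ℝ} (hμ : 0 ≤ μ) (n : ℕ) :
    backwardEulerError μ n ≤ n * μ ^ 2 := by
  have h : ((1 + μ) ^ n)⁻¹ ≤ 1 := inv_le_one_of_one_le₀ (one_le_pow₀ (by linarith))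
  calc backwardEulerError μ n ≤ n * μ ^ 2 * ((1 + μ) ^ n)⁻¹ :=
        backwardEulerError_le_mul_inv_pow (by linarith) n
    _ ≤ n * μ ^ 2 := mul_le_of_le_one_right (by positivity) h

lemma backwardEulerError_le_div {μ : ℝ} (hμ : 0 < μ) {n : ℕ} (hn : 0 < n) :
    backwardEulerError μ n ≤ 48 / (n ^ 2 * μ) := by
  rw [le_div_iff₀ (by positivity)]
  rcases le_total μ 1 with hμ1 | hμ1
  · calc backwardEulerError μ n * (n ^ 2 * μ)
        ≤ n * μ ^ 2 * ((1 + μ) ^ n)⁻¹ * (n ^ 2 * μ) := by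
          gcongr
          exact backwardEulerError_le_mul_inv_pow (by linarith) n
      _ = (n * μ) ^ 3 * ((1 + μ) ^ n)⁻¹ := by ring
      _ ≤ 48 * (1 + μ) ^ n * ((1 + μ) ^ n)⁻¹ := by
          gcongr
          exact nat_mul_pow_three_le_one_add_pow hμ.le hμ1 n
      _ = 48 := by field_simp
  · calc backwardEulerError μ n * (n ^ 2 * μ) ≤ ((1 + μ) ^ n)⁻¹ * (2 * (1 + μ) ^ n) :=
          mul_le_mul (backwardEulerError_le_inv_pow μ n) (nat_sq_mul_le_one_add_pow hμ1 n)
            (by positivity) (by positivity)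
      _ ≤ 48 := by field_simp; norm_num

theorem stmt19 :
    ∃ C : ℝ, 0 < C ∧ ∀ μ : ℝ, 0 < μ → ∀ n : ℕ, 1 ≤ n →
      0 ≤ ((1 + μ) ^ n)⁻¹ - Real.exp (-((n : ℝ) * μ)) ∧
      ((1 + μ) ^ n)⁻¹ - Real.exp (-((n : ℝ) * μ))
        ≤ C * (n : ℝ)⁻¹ * min ((μ * (n : ℝ)) ^ 2) ((μ * (n : ℝ))⁻¹) := by
  refine ⟨48, by norm_num, fun μ hμ n hn => ⟨backwardEulerError_nonneg (by linarith) n, ?_⟩⟩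
  have hn0 : (0 : ℝ) < n := by exact_mod_cast hn
  have hrhs : 48 * (n : ℝ)⁻¹ * min ((μ * n) ^ 2) (μ * n)⁻¹
      = min (48 * (n * μ ^ 2)) (48 / (n ^ 2 * μ)) := by
    rw [mul_min_of_nonneg _ _ (by positivity)]
    congr 1 <;> field_simp
  rw [hrhs]
  exact le_min
    ((backwardEulerError_le_nat_mul_sq hμ.le n).trans (le_mul_of_one_le_left (by positivity)
      (by norm_num)))
    (backwardEulerError_le_div hμ hn)
end
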